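/- For the incidence matrix D of a tree on n vertices, D D^+ = I - (1/n) 1 1^T, the orthogonal projection onto the complement of the all-ones vector. -/

import Mathlib

open Matrix

/-- Signed incidence matrix of an oriented graph with `n` vertices and `m` edges. -/
def incMat (n m : ℕ) (tail head : Fin m → Fin n) : Matrix (Fin n) (Fin m) ℝ :=
  Matrix.of fun i j => (if tail j = i then (1 : ℝ) else 0) - (if head j = i then (1 : ℝ) else 0)

/-- Source vertex of an oriented step (edge together with a traversal direction). -/
def stepSrc {n m : ℕ} (tail head : Fin m → Fin n) (p : Fin m × Bool) : Fin n :=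
  if p.2 then tail p.1 else head p.1

/-- Destination vertex of an oriented step. -/
def stepDst {n m : ℕ} (tail head : Fin m → Fin n) (p : Fin m × Bool) : Fin n :=
  if p.2 then head p.1 else tail p.1

/-- `IsOPath tail head steps s t` : the list of directed steps forms a walk from `s` to `t`. -/
def IsOPath {n m : ℕ} (tail head : Fin m → Fin n) :
    List (Fin m × Bool) → Fin n → Fin n → Prop
  | [], s, t => s = t
  | p :: rest, s, t => stepSrc tail head p = s ∧ IsOPath tail head rest (stepDst tail head p) t

/-- Signed incidence vector of a path given by its list of directed steps. -/
def pathVec {m : ℕ} (steps : List (Fin m × Bool)) (j : Fin m) : ℝ :=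
  (steps.map (fun p => if p.1 = j then (if p.2 then (1 : ℝ) else -1) else 0)).sum

/-- The four Penrose conditions characterizing the Moore–Penrose pseudo-inverse. -/
def IsMoorePenrose {n m : ℕ} (A : Matrix (Fin n) (Fin m) ℝ) (B : Matrix (Fin m) (Fin n) ℝ) : Prop :=
  A * B * A = A ∧ B * A * B = B ∧ (A * B)ᵀ = A * B ∧ (B * A)ᵀ = B * A

/-- The oriented graph is simple: no self-loops and no multi-edges. -/
def SimpleOriented {n m : ℕ} (tail head : Fin m → Fin n) : Prop :=
  (∀ j, tail j ≠ head j) ∧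
  ∀ j k, j ≠ k →
    ¬((tail j = tail k ∧ head j = head k) ∨ (tail j = head k ∧ head j = tail k))

/-- The graph is connected: any two vertices are joined by a path. -/
def OConnected {n m : ℕ} (tail head : Fin m → Fin n) : Prop :=
  ∀ u v : Fin n, ∃ steps, IsOPath tail head steps u v

/-- The graph is acyclic: no nonempty closed walk with pairwise distinct edges. -/
def OAcyclic {n m : ℕ} (tail head : Fin m → Fin n) : Prop :=
  ∀ (v : Fin n) (steps : List (Fin m × Bool)), steps ≠ [] →
    (steps.map Prod.fst).Nodup → ¬ IsOPath tail head steps v v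

/-! A Moore–Penrose inverse makes `D B` the orthogonal projection onto the column space of `D`.
For a connected graph that column space contains every difference `eᵤ - eᵥ` of standard basis
vectors (the image of a path from `u` to `v`), while `𝟙ᵀ D = 0` puts it inside `𝟙ᗮ`. A matrix
fixing all `eᵤ - eᵥ` and killing `𝟙` is `I - 𝟙𝟙ᵀ / N`, because
`∑ᵥ (eᵤ - eᵥ) = N eᵤ - 𝟙`. -/

section MoorePenrose

variable {n m : ℕ} {A : Matrix (Fin n) (Fin m) ℝ} {B : Matrix (Fin m) (Fin n) ℝ}

lemma IsMoorePenrose.mul_mulVec_mulVec (h : IsMoorePenrose A B) (x : Fin m → ℝ) :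
    (A * B) *ᵥ (A *ᵥ x) = A *ᵥ x := by
  rw [mulVec_mulVec, h.1]

lemma IsMoorePenrose.mul_mulVec_eq_zero (h : IsMoorePenrose A B) {x : Fin n → ℝ}
    (hx : x ᵥ* A = 0) : (A * B) *ᵥ x = 0 := by
  rw [← h.2.2.1, mulVec_transpose, ← vecMul_vecMul, hx, zero_vecMul]

end MoorePenrose

lemma eq_one_sub_smul_of_mulVec_single_sub_single {ι : Type*} [Fintype ι] [DecidableEq ι]
    [Nonempty ι] {P : Matrix ι ι ℝ}
    (hfix : ∀ u v : ι, P *ᵥ (Pi.single u 1 - Pi.single v 1) = Pi.single u 1 - Pi.single v 1)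
    (hone : P *ᵥ 1 = 0) :
    P = 1 - (Fintype.card ι : ℝ)⁻¹ • Matrix.of fun _ _ => (1 : ℝ) := by
  have hsum : ∀ u : ι, ∑ v, (Pi.single u 1 - Pi.single v 1 : ι → ℝ)
      = (Fintype.card ι : ℝ) • Pi.single u 1 - 1 := by
    intro u
    rw [Finset.sum_sub_distrib, Finset.univ_sum_single (fun _ => (1 : ℝ)), Finset.sum_const,
      Finset.card_univ, ← Nat.cast_smul_eq_nsmul ℝ]
    rfl
  have hcol : ∀ u : ι, (Fintype.card ι : ℝ) • P.col u
      = (Fintype.card ι : ℝ) • Pi.single u 1 - 1 := by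
    intro u
    calc (Fintype.card ι : ℝ) • P.col u
        = P *ᵥ (∑ v, (Pi.single u 1 - Pi.single v 1) + 1) := by
          rw [hsum, sub_add_cancel, mulVec_smul, mulVec_single_one]
      _ = (Fintype.card ι : ℝ) • Pi.single u 1 - 1 := by
          rw [mulVec_add, hone, add_zero, mulVec_sum, ← hsum]
          exact Finset.sum_congr rfl fun v _ => hfix u v
  ext i u
  have h := congrFun (hcol u) i
  simp only [Pi.smul_apply, col_apply, Pi.sub_apply, Pi.one_apply, smul_eq_mul,
    Pi.single_apply] at h
  rw [Matrix.sub_apply, Matrix.smul_apply, of_apply, smul_eq_mul, mul_one, one_apply]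
  field_simp
  linarith

section Incidence

variable {N M : ℕ} (tail head : Fin M → Fin N)

lemma pathVec_cons (p : Fin M × Bool) (steps : List (Fin M × Bool)) :
    pathVec (p :: steps) = Pi.single p.1 (if p.2 then 1 else -1) + pathVec steps := by
  funext j
  rw [pathVec, List.map_cons, List.sum_cons, Pi.add_apply, Pi.single_apply, pathVec]
  congr 1
  simp only [eq_comm]

lemma incMat_mulVec_single (j : Fin M) (c : ℝ) :
    incMat N M tail head *ᵥ Pi.single j c = c • (Pi.single (tail j) 1 - Pi.single (head j) 1) := by
  funext i
  simp [mulVec_single, incMat, Pi.single_apply, eq_comm, mul_comm]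

lemma incMat_mulVec_pathVec {steps : List (Fin M × Bool)} {u v : Fin N}
    (h : IsOPath tail head steps u v) :
    incMat N M tail head *ᵥ pathVec steps = Pi.single u 1 - Pi.single v 1 := by
  induction steps generalizing u with
  | nil =>
    cases (show u = v from h)
    rw [sub_self, ← mulVec_zero (incMat N M tail head)]
    rfl
  | cons p steps ih =>
    obtain ⟨rfl, hrest⟩ := h
    rw [pathVec_cons, mulVec_add, incMat_mulVec_single, ih hrest]
    obtain ⟨j, _ | _⟩ := p <;> simp [stepSrc, stepDst]

lemma one_vecMul_incMat : (1 : Fin N → ℝ) ᵥ* incMat N M tail head = 0 := by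
  funext j
  simp [vecMul, dotProduct, incMat, Finset.sum_sub_distrib]

end Incidence

theorem stmt6_general (n : ℕ) (tail head : Fin n → Fin (n + 1))
    (hconn : OConnected tail head)
    (B : Matrix (Fin n) (Fin (n + 1)) ℝ)
    (hB : IsMoorePenrose (incMat (n + 1) n tail head) B) :
    incMat (n + 1) n tail head * B =
      (1 : Matrix (Fin (n + 1)) (Fin (n + 1)) ℝ) -
        ((n + 1 : ℝ))⁻¹ • Matrix.of (fun _ _ => (1 : ℝ)) := by
  have hfix : ∀ u v : Fin (n + 1), (incMat (n + 1) n tail head * B) *ᵥ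
      (Pi.single u 1 - Pi.single v 1) = Pi.single u 1 - Pi.single v 1 := by
    intro u v
    obtain ⟨steps, hpath⟩ := hconn u v
    rw [← incMat_mulVec_pathVec tail head hpath, hB.mul_mulVec_mulVec]
  have hP := eq_one_sub_smul_of_mulVec_single_sub_single hfix
    (hB.mul_mulVec_eq_zero (one_vecMul_incMat tail head))
  simpa using hP

/-- for the incidence matrix `D` of a tree on `n+1` vertices,
`D D⁺ = I - (1/(n+1)) 𝟙 𝟙ᵀ`, the orthogonal projection onto the complement of
the all-ones vector. -/
theorem stmt6 (n : ℕ) (tail head : Fin n → Fin (n + 1))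
    (hsimple : SimpleOriented tail head)
    (hconn : OConnected tail head) (hacyc : OAcyclic tail head)
    (B : Matrix (Fin n) (Fin (n + 1)) ℝ)
    (hB : IsMoorePenrose (incMat (n + 1) n tail head) B) :
    incMat (n + 1) n tail head * B =
      (1 : Matrix (Fin (n + 1)) (Fin (n + 1)) ℝ) -
        ((n + 1 : ℝ))⁻¹ • Matrix.of (fun _ _ => (1 : ℝ)) :=
  stmt6_general n tail head hconn B hB
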